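/- arXiv:2202.10171 — 2 statements merged into one kernel-verified Lean document; each statement's English description precedes it below -/
import Mathlib

section
/- (Hutchinson lemma) Let (M, ρ) be a metric space and f₁, …, f_k : M → M maps. Suppose there exist compact sets D ⊆ Z ⊆ M such that fᵢ(Z) ⊆ Z for all i, each fᵢ is a contraction on Z (with a common ratio λ < 1), and D ⊆ ⋃ᵢ fᵢ(D). Then for the attractor K of the iterated function system and for every open set U with U ∩ D ≠ ∅, there exists a finite word w = ω₁…ω_m such that f_{ω₁} ∘ ⋯ ∘ f_{ω_m}(Z) ⊆ U. -/
/-!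
Backward orbits under the covering `D ⊆ ⋃ᵢ fᵢ(D)` give, for every `x ∈ D` and every length `m`,
a word `w` of length `m` and a point `y ∈ D` with `f_w(y) = x`. Since `f_w` is a
`λ^m`-contraction on `Z ∋ y`, the image `f_w(Z)` lies within `λ^m · diam Z` of `x`, which is
inside any prescribed ball around `x` once `m` is large.
-/

open Metric Set Function

/-- Composition `f_{ω₁} ∘ ⋯ ∘ f_{ω_m}` along a word. -/
def wordComp {M : Type*} {k : ℕ} (f : Fin k → M → M) : List (Fin k) → M → M
  | [] => id
  | i :: l => f i ∘ wordComp f l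

open scoped NNReal

section WordComp

variable {M : Type*} {k : ℕ} {f : Fin k → M → M}

theorem mapsTo_wordComp {Z : Set M} (hmaps : ∀ i, MapsTo (f i) Z Z) :
    ∀ w : List (Fin k), MapsTo (wordComp f w) Z Z
  | [] => mapsTo_id Z
  | i :: w => (hmaps i).comp (mapsTo_wordComp hmaps w)

theorem lipschitzOnWith_wordComp [PseudoEMetricSpace M] {Z : Set M} {K : ℝ≥0}
    (hf : ∀ i, LipschitzOnWith K (f i) Z) (hmaps : ∀ i, MapsTo (f i) Z Z) :
    ∀ w : List (Fin k), LipschitzOnWith (K ^ w.length) (wordComp f w) Z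
  | [] => by
    rw [List.length_nil, pow_zero]
    exact LipschitzWith.id.lipschitzOnWith
  | i :: w => by
    rw [List.length_cons, pow_succ']
    exact (hf i).comp (lipschitzOnWith_wordComp hf hmaps w) (mapsTo_wordComp hmaps w)

theorem wordComp_image_subset_closedBall [PseudoMetricSpace M] {Z : Set M} {K : ℝ≥0}
    (hf : ∀ i, LipschitzOnWith K (f i) Z) (hmaps : ∀ i, MapsTo (f i) Z Z)
    (hZ : Bornology.IsBounded Z) (w : List (Fin k)) {y : M} (hy : y ∈ Z) :
    wordComp f w '' Z ⊆ closedBall (wordComp f w y) (K ^ w.length * diam Z) := by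
  rintro _ ⟨z, hz, rfl⟩
  calc dist (wordComp f w z) (wordComp f w y)
      ≤ (K ^ w.length : ℝ≥0) * dist z y :=
        (lipschitzOnWith_wordComp hf hmaps w).dist_le_mul z hz y hy
    _ ≤ K ^ w.length * diam Z := by
        push_cast
        gcongr
        exact dist_le_diam_of_mem hZ hz hy

theorem exists_wordComp_eq_of_subset_iUnion_image {D : Set M}
    (hcover : D ⊆ ⋃ i, f i '' D) (m : ℕ) :
    ∀ x ∈ D, ∃ w : List (Fin k), w.length = m ∧ ∃ y ∈ D, wordComp f w y = x := by
  induction m with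
  | zero => exact fun x hx => ⟨[], rfl, x, hx, rfl⟩
  | succ m ih =>
    intro x hx
    obtain ⟨i, x', hx'D, rfl⟩ := mem_iUnion.1 (hcover hx)
    obtain ⟨w, hw, y, hyD, rfl⟩ := ih x' hx'D
    exact ⟨i :: w, by simp [hw], y, hyD, rfl⟩

end WordComp

theorem hutchinson_lemma_general
    {M : Type*} [MetricSpace M] {k : ℕ} (f : Fin k → M → M)
    (D Z : Set M) (hZ : IsCompact Z) (hDZ : D ⊆ Z)
    (hmaps : ∀ i, f i '' Z ⊆ Z)
    (lam : ℝ) (hlam0 : 0 ≤ lam) (hlam : lam < 1)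
    (hcontr : ∀ i, ∀ x ∈ Z, ∀ y ∈ Z, dist (f i x) (f i y) ≤ lam * dist x y)
    (hcover : D ⊆ ⋃ i, f i '' D) :
    ∀ U : Set M, IsOpen U → (U ∩ D).Nonempty →
      ∃ w : List (Fin k), w ≠ [] ∧ wordComp f w '' Z ⊆ U := by
  intro U hU ⟨x, hxU, hxD⟩
  obtain ⟨ε, hε, hball⟩ := isOpen_iff.1 hU x hxU
  obtain ⟨m, hm1, hmε⟩ : ∃ m, 1 ≤ m ∧ lam ^ m * diam Z < ε :=
    ((Filter.eventually_ge_atTop 1).and <|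
      ((tendsto_pow_atTop_nhds_zero_of_lt_one hlam0 hlam).mul_const (diam Z)).eventually
        (gt_mem_nhds (by simpa using hε))).exists
  obtain ⟨w, rfl, y, hyD, rfl⟩ := exists_wordComp_eq_of_subset_iUnion_image hcover m x hxD
  refine ⟨w, List.ne_nil_of_length_pos hm1, fun z hz => hball ?_⟩
  have hclosed := wordComp_image_subset_closedBall (K := ⟨lam, hlam0⟩)
    (fun i => LipschitzOnWith.of_dist_le_mul (hcontr i))
    (fun i => mapsTo_iff_image_subset.2 (hmaps i))
    hZ.isBounded w (hDZ hyD) hz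
  exact closedBall_subset_ball hmε hclosed

/-- Hutchinson's lemma: if `D ⊆ Z` are compact, each `fᵢ` maps `Z` into `Z`
and is a `λ`-contraction on `Z` with `λ < 1`, and `D ⊆ ⋃ᵢ fᵢ(D)`, then for
every open set `U` meeting `D` there is a nonempty finite word `w` with
`f_{ω₁} ∘ ⋯ ∘ f_{ω_m}(Z) ⊆ U`. -/
theorem hutchinson_lemma
    {M : Type*} [MetricSpace M] {k : ℕ} (f : Fin k → M → M)
    (D Z : Set M) (hD : IsCompact D) (hZ : IsCompact Z) (hDZ : D ⊆ Z)
    (hmaps : ∀ i, f i '' Z ⊆ Z)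
    (lam : ℝ) (hlam0 : 0 ≤ lam) (hlam : lam < 1)
    (hcontr : ∀ i, ∀ x ∈ Z, ∀ y ∈ Z, dist (f i x) (f i y) ≤ lam * dist x y)
    (hcover : D ⊆ ⋃ i, f i '' D) :
    ∀ U : Set M, IsOpen U → (U ∩ D).Nonempty →
      ∃ w : List (Fin k), w ≠ [] ∧ wordComp f w '' Z ⊆ U :=
  hutchinson_lemma_general f D Z hZ hDZ hmaps lam hlam0 hlam hcontr hcover
end

section
/- Let X = [−1,1] ∪ {2} ⊆ ℝ with the subspace metric, and define f : X → X by f(t) = 2 for t ∈ [−1,1] and f(2) = 0. Then f is continuous, the set A = {0, 2} satisfies f(A) = A, the point 2 is an interior point of A in X while 0 is not, so A ≠ closure(interior(A)) in X; moreover f maps the interior point 2 of A to the non-interior point 0. -/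
open Set

/-- The phase space `X = [-1,1] ∪ {2} ⊆ ℝ`. -/
def PinheiroX : Set ℝ := Set.Icc (-1) 1 ∪ {2}

lemma pinheiro_U_open : IsOpen {t : PinheiroX | (t : ℝ) = 2} := by
  have h : {t : PinheiroX | (t : ℝ) = 2}
      = Subtype.val ⁻¹' (Set.Ioo (3/2 : ℝ) (5/2)) := by
    ext t
    simp only [mem_setOf_eq, mem_preimage, mem_Ioo]
    constructor
    · intro h; rw [h]; norm_num
    · rintro ⟨h1, _⟩
      rcases t.2 with h | h
      · exfalso; have := h.2; linarith
      · exact h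
  rw [h]; exact isOpen_Ioo.preimage continuous_subtype_val

lemma pinheiro_Uc_open : IsOpen {t : PinheiroX | (t : ℝ) ≠ 2} := by
  have h : {t : PinheiroX | (t : ℝ) ≠ 2}
      = Subtype.val ⁻¹' (Set.Iio (3/2 : ℝ)) := by
    ext t
    simp only [mem_setOf_eq, mem_preimage, mem_Iio]
    constructor
    · intro h
      rcases t.2 with h' | h'
      · have := h'.2; linarith
      · exact absurd h' h
    · intro h he; rw [he] at h; linarith
  rw [h]; exact isOpen_Iio.preimage continuous_subtype_val

lemma pinheiro_mem_Icc_of_ne (t : PinheiroX) (h : (t : ℝ) ≠ 2) :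
    (t : ℝ) ∈ Set.Icc (-1 : ℝ) 1 := by
  rcases t.2 with h' | h'
  · exact h'
  · exact absurd h' h

/-- The counterexample: the map `f` on `X = [-1,1] ∪ {2}` sending `[-1,1]` to
`2` and `2` to `0` is continuous, `A = {0, 2}` satisfies `f(A) = A`, `2` is an
interior point of `A` in `X` while `0` is not, so `A ≠ closure (interior A)`;
moreover `f` maps the interior point `2` to the non-interior point `0`. -/
theorem pinheiro_counterexample
    (f : PinheiroX → PinheiroX)
    (hf₁ : ∀ t : PinheiroX, (t : ℝ) ∈ Set.Icc (-1 : ℝ) 1 → (f t : ℝ) = 2)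
    (hf₂ : ∀ t : PinheiroX, (t : ℝ) = 2 → (f t : ℝ) = 0) :
    Continuous f ∧
      (f '' {t : PinheiroX | (t : ℝ) = 0 ∨ (t : ℝ) = 2}
          = {t : PinheiroX | (t : ℝ) = 0 ∨ (t : ℝ) = 2}) ∧
      (⟨2, Or.inr rfl⟩ : PinheiroX) ∈
        interior {t : PinheiroX | (t : ℝ) = 0 ∨ (t : ℝ) = 2} ∧
      (⟨0, Or.inl (by norm_num)⟩ : PinheiroX) ∉
        interior {t : PinheiroX | (t : ℝ) = 0 ∨ (t : ℝ) = 2} ∧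
      {t : PinheiroX | (t : ℝ) = 0 ∨ (t : ℝ) = 2}
          ≠ closure (interior {t : PinheiroX | (t : ℝ) = 0 ∨ (t : ℝ) = 2}) ∧
      (f ⟨2, Or.inr rfl⟩ : ℝ) = 0 ∧
      f ⟨2, Or.inr rfl⟩ ∉
        interior {t : PinheiroX | (t : ℝ) = 0 ∨ (t : ℝ) = 2} := by
  set A : Set PinheiroX := {t : PinheiroX | (t : ℝ) = 0 ∨ (t : ℝ) = 2} with hA
  have hzero : ((-1:ℝ)) ≤ 0 ∧ (0:ℝ) ≤ 1 := by norm_num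
  have hz : (0:ℝ) ∈ PinheiroX := Or.inl (by norm_num)
  have h2 : (2:ℝ) ∈ PinheiroX := Or.inr rfl
  -- continuity
  have hcont : Continuous f := by
    rw [continuous_iff_continuousAt]
    intro t
    by_cases ht : (t : ℝ) = 2
    · have hev : f =ᶠ[nhds t] fun _ => f t :=
        Filter.eventuallyEq_of_mem (pinheiro_U_open.mem_nhds ht)
          (fun t' ht' => by
            apply Subtype.ext
            rw [hf₂ t' ht', hf₂ t ht])
      exact (continuousAt_const).congr hev.symm
    · have hev : f =ᶠ[nhds t] fun _ => f t :=
        Filter.eventuallyEq_of_mem (pinheiro_Uc_open.mem_nhds ht)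
          (fun t' ht' => by
            apply Subtype.ext
            rw [hf₁ t' (pinheiro_mem_Icc_of_ne t' ht'),
              hf₁ t (pinheiro_mem_Icc_of_ne t ht)])
      exact (continuousAt_const).congr hev.symm
  -- image
  have himg : f '' A = A := by
    ext s
    constructor
    · rintro ⟨t, ht, rfl⟩
      rcases ht with h0 | h2'
      · exact Or.inr (hf₁ t (by rw [h0]; constructor <;> norm_num))
      · exact Or.inl (hf₂ t h2')
    · rintro (h0 | h2')
      · refine ⟨⟨2, h2⟩, Or.inr rfl, Subtype.ext ?_⟩
        rw [hf₂ _ rfl, h0]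
      · refine ⟨⟨0, hz⟩, Or.inl rfl, Subtype.ext ?_⟩
        rw [hf₁ _ (by constructor <;> norm_num), h2']
  -- interior facts
  have hUsub : {t : PinheiroX | (t : ℝ) = 2} ⊆ A := fun t ht => Or.inr ht
  have h2int : (⟨2, h2⟩ : PinheiroX) ∈ interior A :=
    interior_maximal hUsub pinheiro_U_open rfl
  have h0notint : (⟨0, hz⟩ : PinheiroX) ∉ interior A := by
    intro hmem
    rw [mem_interior_iff_mem_nhds, nhds_subtype_eq_comap, Filter.mem_comap] at hmem
    obtain ⟨W, hW, hWA⟩ := hmem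
    obtain ⟨ε, hε, hball⟩ := Metric.mem_nhds_iff.mp hW
    set x : ℝ := min ε 1 / 2 with hx
    have hx0 : 0 < x := by positivity
    have hx1 : x ≤ 1/2 := by
      have := min_le_right ε (1:ℝ); rw [hx]; linarith
    have hxe : x < ε := by
      have : x ≤ ε / 2 := by
        apply div_le_div_of_nonneg_right (min_le_left _ _) (by norm_num)
      linarith
    have hxX : x ∈ PinheiroX := Or.inl ⟨by linarith, by linarith⟩
    have hxW : x ∈ W := hball (by
      simp [Metric.mem_ball, Real.dist_eq, abs_of_pos hx0, hxe])
    have : (⟨x, hxX⟩ : PinheiroX) ∈ A := hWA hxW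
    rcases this with h | h
    · simp only at h; linarith
    · simp only at h; linarith
  have hclosed : IsClosed {t : PinheiroX | (t : ℝ) = 2} := by
    rw [← isOpen_compl_iff]
    exact pinheiro_Uc_open
  have hintU : interior A ⊆ {t : PinheiroX | (t : ℝ) = 2} := by
    intro t ht
    rcases interior_subset ht with h0 | h2'
    · exfalso
      apply h0notint
      have : t = ⟨0, hz⟩ := Subtype.ext h0
      rwa [this] at ht
    · exact h2'
  have hne : A ≠ closure (interior A) := by
    intro heq
    have : (⟨0, hz⟩ : PinheiroX) ∈ closure (interior A) := by
      rw [← heq]; exact Or.inl rfl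
    have h0U : (⟨0, hz⟩ : PinheiroX) ∈ {t : PinheiroX | (t : ℝ) = 2} :=
      (hclosed.closure_subset_iff.mpr hintU) this
    norm_num at h0U
  have hf2val : (f ⟨2, h2⟩ : ℝ) = 0 := hf₂ _ rfl
  have hf2eq : f ⟨2, h2⟩ = ⟨0, hz⟩ := Subtype.ext hf2val
  exact ⟨hcont, himg, h2int, h0notint, hne, hf2val, by rw [hf2eq]; exact h0notint⟩
end
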